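/- arXiv:1510.07676 — 5 statements merged into one kernel-verified Lean document; each statement's English description precedes it below -/
import Mathlib

section
/- Let G be an undirected multigraph without self-loops with maximum degree at most d and m edges, and let (A,B) be a partition of V(G) that is locally optimal for the measure μ(A,B) = |m_A - m/4| + |m_B - m/4| (where m_A, m_B are the numbers of edges inside A and inside B respectively), meaning that moving any single vertex from one side to the other does not decrease μ. Then |m_A - m/4| ≤ d/2 and |m_B - m/4| ≤ d/2. -/
open Finset

/-- Number of edges with both endpoints in `A`. -/
def insideCard {V E : Type*} [Fintype E] [DecidableEq V]
    (ends : E → V × V) (A : Finset V) : ℕ :=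
  (Finset.univ.filter (fun e : E => (ends e).1 ∈ A ∧ (ends e).2 ∈ A)).card

/-- Number of edges with both endpoints outside `A`. -/
def outsideCard {V E : Type*} [Fintype E] [DecidableEq V]
    (ends : E → V × V) (A : Finset V) : ℕ :=
  (Finset.univ.filter (fun e : E => (ends e).1 ∉ A ∧ (ends e).2 ∉ A)).card

/-- The measure μ(A,B) = |m_A - m/4| + |m_B - m/4|. -/
noncomputable def muMeasure {V E : Type*} [Fintype E] [DecidableEq V]
    (ends : E → V × V) (A : Finset V) : ℝ :=
  |(insideCard ends A : ℝ) - (Fintype.card E : ℝ) / 4| +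
    |(outsideCard ends A : ℝ) - (Fintype.card E : ℝ) / 4|

section Aux

variable {V E : Type*} [Fintype E] [DecidableEq V]

/-- edges inside A incident to v -/
def degIn (ends : E → V × V) (A : Finset V) (v : V) : ℕ :=
  (Finset.univ.filter (fun e : E =>
    ((ends e).1 ∈ A ∧ (ends e).2 ∈ A) ∧ ((ends e).1 = v ∨ (ends e).2 = v))).card

/-- edges from v to outside A -/
def degOut (ends : E → V × V) (A : Finset V) (v : V) : ℕ :=
  (Finset.univ.filter (fun e : E =>
    ((ends e).1 = v ∧ (ends e).2 ∉ A) ∨ ((ends e).2 = v ∧ (ends e).1 ∉ A))).card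

/-- cross edges -/
def crossCard (ends : E → V × V) (A : Finset V) : ℕ :=
  (Finset.univ.filter (fun e : E => (ends e).1 ∈ A ∧ (ends e).2 ∉ A)).card +
  (Finset.univ.filter (fun e : E => (ends e).1 ∉ A ∧ (ends e).2 ∈ A)).card

lemma total_card (ends : E → V × V) (A : Finset V) :
    insideCard ends A + outsideCard ends A + crossCard ends A = Fintype.card E := by
  classical
  rw [insideCard, outsideCard, crossCard, Fintype.card]
  simp only [card_filter]
  rw [← Finset.sum_add_distrib, ← Finset.sum_add_distrib, ← Finset.sum_add_distrib]
  rw [Finset.card_eq_sum_ones]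
  apply Finset.sum_congr rfl
  intro e _
  by_cases h1 : (ends e).1 ∈ A <;> by_cases h2 : (ends e).2 ∈ A <;> simp [h1, h2]

lemma sum_degIn (ends : E → V × V) (hloop : ∀ e, (ends e).1 ≠ (ends e).2) (A : Finset V) :
    ∑ v ∈ A, degIn ends A v = 2 * insideCard ends A := by
  classical
  simp only [degIn, card_filter]
  rw [Finset.sum_comm]
  have key : ∀ e : E, (∑ v ∈ A, if ((ends e).1 ∈ A ∧ (ends e).2 ∈ A) ∧ ((ends e).1 = v ∨ (ends e).2 = v) then 1 else 0)
      = if (ends e).1 ∈ A ∧ (ends e).2 ∈ A then 2 else 0 := by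
    intro e
    by_cases hP : (ends e).1 ∈ A ∧ (ends e).2 ∈ A
    · simp only [hP, true_and, if_true]
      rw [← card_filter]
      have hset : A.filter (fun v => (ends e).1 = v ∨ (ends e).2 = v)
          = {(ends e).1, (ends e).2} := by
        ext v
        simp only [mem_filter, mem_insert, mem_singleton]
        constructor
        · rintro ⟨-, h | h⟩
          · exact Or.inl h.symm
          · exact Or.inr h.symm
        · rintro (rfl | rfl)
          · exact ⟨hP.1, Or.inl rfl⟩
          · exact ⟨hP.2, Or.inr rfl⟩
      rw [hset, card_pair (hloop e)]
    · simp only [hP, false_and, if_false, Finset.sum_const_zero]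
  rw [Finset.sum_congr rfl (fun e _ => key e), ← Finset.sum_filter, Finset.sum_const,
    smul_eq_mul, mul_comm, insideCard]

lemma sum_degOut (ends : E → V × V) (A : Finset V) :
    ∑ v ∈ A, degOut ends A v = crossCard ends A := by
  classical
  simp only [degOut, card_filter]
  rw [Finset.sum_comm]
  have key : ∀ e : E, (∑ v ∈ A, if ((ends e).1 = v ∧ (ends e).2 ∉ A) ∨ ((ends e).2 = v ∧ (ends e).1 ∉ A) then 1 else 0)
      = (if (ends e).1 ∈ A ∧ (ends e).2 ∉ A then 1 else 0)
        + (if (ends e).1 ∉ A ∧ (ends e).2 ∈ A then 1 else 0) := by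
    intro e
    rw [← card_filter]
    by_cases h1 : (ends e).1 ∈ A <;> by_cases h2 : (ends e).2 ∈ A
    · have hs : A.filter (fun v => ((ends e).1 = v ∧ (ends e).2 ∉ A) ∨ ((ends e).2 = v ∧ (ends e).1 ∉ A)) = ∅ := by
        apply filter_false_of_mem
        rintro v hv (⟨-, hq⟩ | ⟨-, hp⟩)
        · exact hq h2
        · exact hp h1
      rw [hs]
      simp [h1, h2]
    · have hs : A.filter (fun v => ((ends e).1 = v ∧ (ends e).2 ∉ A) ∨ ((ends e).2 = v ∧ (ends e).1 ∉ A)) = {(ends e).1} := by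
        ext v
        simp only [mem_filter, mem_singleton]
        constructor
        · rintro ⟨hv, ⟨h, -⟩ | ⟨-, hp⟩⟩
          · exact h.symm
          · exact absurd h1 hp
        · rintro rfl
          exact ⟨h1, Or.inl ⟨rfl, h2⟩⟩
      rw [hs]
      simp [h1, h2]
    · have hs : A.filter (fun v => ((ends e).1 = v ∧ (ends e).2 ∉ A) ∨ ((ends e).2 = v ∧ (ends e).1 ∉ A)) = {(ends e).2} := by
        ext v
        simp only [mem_filter, mem_singleton]
        constructor
        · rintro ⟨hv, ⟨-, hq⟩ | ⟨h, -⟩⟩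
          · exact absurd h2 hq
          · exact h.symm
        · rintro rfl
          exact ⟨h2, Or.inr ⟨rfl, h1⟩⟩
      rw [hs]
      simp [h1, h2]
    · have hs : A.filter (fun v => ((ends e).1 = v ∧ (ends e).2 ∉ A) ∨ ((ends e).2 = v ∧ (ends e).1 ∉ A)) = ∅ := by
        apply filter_false_of_mem
        rintro v hv (⟨h, -⟩ | ⟨h, -⟩)
        · exact h1 (by rwa [h])
        · exact h2 (by rwa [h])
      rw [hs]
      simp [h1, h2]
  rw [Finset.sum_congr rfl (fun e _ => key e), Finset.sum_add_distrib, ← card_filter, ← card_filter,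
    crossCard]

lemma inside_erase (ends : E → V × V) (A : Finset V) (v : V) :
    insideCard ends (A.erase v) + degIn ends A v = insideCard ends A := by
  classical
  rw [insideCard, insideCard, degIn]
  have h1 : Finset.univ.filter (fun e : E => (ends e).1 ∈ A.erase v ∧ (ends e).2 ∈ A.erase v)
      = (Finset.univ.filter (fun e : E => (ends e).1 ∈ A ∧ (ends e).2 ∈ A)).filter
          (fun e => ¬((ends e).1 = v ∨ (ends e).2 = v)) := by
    ext e
    simp only [mem_filter, mem_univ, true_and, Finset.mem_erase, ne_eq, not_or]
    tauto
  have h2 : Finset.univ.filter (fun e : E =>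
        ((ends e).1 ∈ A ∧ (ends e).2 ∈ A) ∧ ((ends e).1 = v ∨ (ends e).2 = v))
      = (Finset.univ.filter (fun e : E => (ends e).1 ∈ A ∧ (ends e).2 ∈ A)).filter
          (fun e => (ends e).1 = v ∨ (ends e).2 = v) := by
    rw [Finset.filter_filter]
  rw [h1, h2, add_comm]
  exact Finset.card_filter_add_card_filter_not _

lemma outside_erase (ends : E → V × V) (hloop : ∀ e, (ends e).1 ≠ (ends e).2)
    (A : Finset V) (v : V) (hv : v ∈ A) :
    outsideCard ends (A.erase v) = outsideCard ends A + degOut ends A v := by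
  classical
  rw [outsideCard, outsideCard, degOut]
  have h1 : Finset.univ.filter (fun e : E => (ends e).1 ∉ A.erase v ∧ (ends e).2 ∉ A.erase v)
      = Finset.univ.filter (fun e : E => (ends e).1 ∉ A ∧ (ends e).2 ∉ A)
        ∪ Finset.univ.filter (fun e : E =>
            ((ends e).1 = v ∧ (ends e).2 ∉ A) ∨ ((ends e).2 = v ∧ (ends e).1 ∉ A)) := by
    ext e
    have hne := hloop e
    simp only [mem_filter, mem_univ, true_and, mem_union, Finset.mem_erase, ne_eq, not_and, not_not]
    by_cases hx : (ends e).1 = v <;> by_cases hy : (ends e).2 = v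
    · exact (hne (hx.trans hy.symm)).elim
    · tauto
    · tauto
    · tauto
  rw [h1, Finset.card_union_of_disjoint]
  rw [Finset.disjoint_left]
  intro e he1 he2
  simp only [mem_filter, mem_univ, true_and] at he1 he2
  rcases he2 with ⟨h, -⟩ | ⟨h, -⟩
  · exact he1.1 (by rwa [h])
  · exact he1.2 (by rwa [h])

lemma deg_bound (ends : E → V × V) (d : ℕ)
    (hdeg : ∀ v : V,
      (Finset.univ.filter (fun e : E => (ends e).1 = v ∨ (ends e).2 = v)).card ≤ d)
    (A : Finset V) (v : V) :
    degIn ends A v + degOut ends A v ≤ d := by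
  classical
  rw [degIn, degOut, ← Finset.card_union_of_disjoint]
  · refine le_trans (Finset.card_le_card ?_) (hdeg v)
    intro e he
    simp only [mem_union, mem_filter, mem_univ, true_and] at he ⊢
    tauto
  · rw [Finset.disjoint_left]
    intro e he1 he2
    simp only [mem_filter, mem_univ, true_and] at he1 he2
    rcases he2 with ⟨-, hq⟩ | ⟨-, hp⟩
    · exact hq he1.1.2
    · exact hp he1.1.1

variable [Fintype V]

lemma inside_compl (ends : E → V × V) (A : Finset V) :
    insideCard ends Aᶜ = outsideCard ends A := by
  rw [insideCard, outsideCard]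
  congr 1
  ext e
  simp [Finset.mem_compl]

lemma outside_compl (ends : E → V × V) (A : Finset V) :
    outsideCard ends Aᶜ = insideCard ends A := by
  rw [insideCard, outsideCard]
  congr 1
  ext e
  simp [Finset.mem_compl]

lemma mu_compl (ends : E → V × V) (A : Finset V) :
    muMeasure ends Aᶜ = muMeasure ends A := by
  rw [muMeasure, muMeasure, inside_compl, outside_compl, add_comm]

end Aux

set_option maxHeartbeats 1000000 in
lemma upperU {V E : Type*} [Fintype E] [DecidableEq V]
    (ends : E → V × V) (hloop : ∀ e, (ends e).1 ≠ (ends e).2)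
    (d : ℕ)
    (hdeg : ∀ v : V,
      (Finset.univ.filter (fun e : E => (ends e).1 = v ∨ (ends e).2 = v)).card ≤ d)
    (A : Finset V)
    (hloc : ∀ v ∈ A, muMeasure ends A ≤ muMeasure ends (A.erase v)) :
    (insideCard ends A : ℝ) - (Fintype.card E : ℝ) / 4 ≤ (d : ℝ) / 2 := by
  classical
  by_contra hcon
  push_neg at hcon
  set m : ℝ := (Fintype.card E : ℝ) with hm_def
  set a : ℝ := (insideCard ends A : ℝ) with ha_def
  set b : ℝ := (outsideCard ends A : ℝ) with hb_def
  set c : ℝ := (crossCard ends A : ℝ) with hc_def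
  have hm0 : (0:ℝ) ≤ m := by rw [hm_def]; positivity
  have hd0 : (0:ℝ) ≤ (d:ℝ) := by positivity
  have hb0 : (0:ℝ) ≤ b := by rw [hb_def]; positivity
  have htot : a + b + c = m := by
    rw [ha_def, hb_def, hc_def, hm_def]
    exact_mod_cast total_card ends A
  have ha1 : 1 ≤ insideCard ends A := by
    by_contra h
    push_neg at h
    have h0 : insideCard ends A = 0 := by omega
    have : a = 0 := by rw [ha_def, h0]; norm_num
    linarith
  obtain ⟨e0, he0⟩ : (Finset.univ.filter
      (fun e : E => (ends e).1 ∈ A ∧ (ends e).2 ∈ A)).Nonempty := by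
    apply Finset.card_pos.mp
    have h : insideCard ends A = (Finset.univ.filter
      (fun e : E => (ends e).1 ∈ A ∧ (ends e).2 ∈ A)).card := rfl
    omega
  have he0A : (ends e0).1 ∈ A ∧ (ends e0).2 ∈ A := (Finset.mem_filter.mp he0).2
  have hv0 : 1 ≤ degIn ends A (ends e0).1 :=
    Finset.card_pos.mpr ⟨e0, Finset.mem_filter.mpr ⟨Finset.mem_univ _, he0A, Or.inl rfl⟩⟩
  have hex : ∃ v ∈ A, 1 ≤ degIn ends A v ∧
      2 * min (b - m/4) 0 < (degIn ends A v : ℝ) - (degOut ends A v : ℝ) := by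
    by_contra hno
    push_neg at hno
    set T := A.filter (fun v => 1 ≤ degIn ends A v) with hT_def
    have hTne : 1 ≤ T.card :=
      Finset.card_pos.mpr ⟨(ends e0).1, Finset.mem_filter.mpr ⟨he0A.1, hv0⟩⟩
    have hTne' : (1:ℝ) ≤ (T.card : ℝ) := by exact_mod_cast hTne
    have hmin0 : min (b - m/4) 0 ≤ 0 := min_le_right _ _
    have h1 : ∑ v ∈ T, ((degIn ends A v : ℝ) - (degOut ends A v : ℝ))
        ≤ (T.card : ℝ) * (2 * min (b - m/4) 0) := by
      calc ∑ v ∈ T, ((degIn ends A v : ℝ) - (degOut ends A v : ℝ))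
          ≤ ∑ _v ∈ T, (2 * min (b - m/4) 0) := by
            apply Finset.sum_le_sum
            intro v hv
            exact hno v (Finset.mem_filter.mp hv).1 (Finset.mem_filter.mp hv).2
        _ = (T.card : ℝ) * (2 * min (b - m/4) 0) := by
            rw [Finset.sum_const, nsmul_eq_mul]
    have h2 : ∑ v ∈ A.filter (fun v => ¬ 1 ≤ degIn ends A v),
        ((degIn ends A v : ℝ) - (degOut ends A v : ℝ)) ≤ 0 := by
      apply Finset.sum_nonpos
      intro v hv
      have h0 : degIn ends A v = 0 := by
        have := (Finset.mem_filter.mp hv).2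
        omega
      rw [h0]
      simp only [Nat.cast_zero, zero_sub, neg_nonpos]
      positivity
    have hsplit := Finset.sum_filter_add_sum_filter_not A (fun v => 1 ≤ degIn ends A v)
      (fun v => (degIn ends A v : ℝ) - (degOut ends A v : ℝ))
    have hid : ∑ v ∈ A, ((degIn ends A v : ℝ) - (degOut ends A v : ℝ)) = 2*a - c := by
      rw [Finset.sum_sub_distrib, ha_def, hc_def, ← Nat.cast_sum, ← Nat.cast_sum,
        sum_degIn ends hloop A, sum_degOut ends A]
      push_cast
      ring
    have hNz : (T.card : ℝ) * (2 * min (b - m/4) 0) ≤ 1 * (2 * min (b - m/4) 0) :=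
      mul_le_mul_of_nonpos_right hTne' (by linarith)
    rcases min_cases (b - m/4) 0 with ⟨hm1, hm2⟩ | ⟨hm1, hm2⟩ <;>
      rw [hm1] at h1 hNz <;> linarith
  obtain ⟨v, hvA, hx1, hkey⟩ := hex
  have hmove := hloc v hvA
  have hmv1 := inside_erase ends A v
  have hmv2 := outside_erase ends hloop A v hvA
  have hdb := deg_bound ends d hdeg A v
  set x : ℝ := (degIn ends A v : ℝ) with hx_def
  set y : ℝ := (degOut ends A v : ℝ) with hy_def
  have hx1' : (1:ℝ) ≤ x := by rw [hx_def]; exact_mod_cast hx1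
  have hy0 : (0:ℝ) ≤ y := by rw [hy_def]; positivity
  have hxy : x + y ≤ (d:ℝ) := by
    rw [hx_def, hy_def]
    exact_mod_cast hdb
  have e1 : (insideCard ends (A.erase v) : ℝ) = a - x := by
    rw [ha_def, hx_def]
    have h := congrArg (fun n : ℕ => (n : ℝ)) hmv1
    push_cast at h
    linarith
  have e2 : (outsideCard ends (A.erase v) : ℝ) = b + y := by
    rw [hb_def, hy_def]
    exact_mod_cast hmv2
  simp only [muMeasure] at hmove
  rw [← hm_def, ← ha_def, ← hb_def, e1, e2] at hmove
  have habs : |a - m/4| = a - m/4 := abs_of_pos (by linarith)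
  rw [habs] at hmove
  rcases abs_cases (a - x - m/4) with ⟨hA1, hA2⟩ | ⟨hA1, hA2⟩ <;>
    rcases abs_cases (b + y - m/4) with ⟨hB1, hB2⟩ | ⟨hB1, hB2⟩ <;>
    rcases abs_cases (b - m/4) with ⟨hC1, hC2⟩ | ⟨hC1, hC2⟩ <;>
    rcases min_cases (b - m/4) 0 with ⟨hm1, hm2⟩ | ⟨hm1, hm2⟩ <;>
    rw [hA1, hB1, hC1] at hmove <;> rw [hm1] at hkey <;> linarith

set_option maxHeartbeats 1000000 in
lemma lowerL {V E : Type*} [Fintype E] [DecidableEq V]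
    (ends : E → V × V) (hloop : ∀ e, (ends e).1 ≠ (ends e).2)
    (d : ℕ)
    (hdeg : ∀ v : V,
      (Finset.univ.filter (fun e : E => (ends e).1 = v ∨ (ends e).2 = v)).card ≤ d)
    (A : Finset V)
    (hloc : ∀ v ∈ A, muMeasure ends A ≤ muMeasure ends (A.erase v)) :
    (Fintype.card E : ℝ) / 4 - (outsideCard ends A : ℝ) ≤ (d : ℝ) / 2 := by
  classical
  by_contra hcon
  push_neg at hcon
  set m : ℝ := (Fintype.card E : ℝ) with hm_def
  set a : ℝ := (insideCard ends A : ℝ) with ha_def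
  set b : ℝ := (outsideCard ends A : ℝ) with hb_def
  set c : ℝ := (crossCard ends A : ℝ) with hc_def
  have hm0 : (0:ℝ) ≤ m := by rw [hm_def]; positivity
  have hd0 : (0:ℝ) ≤ (d:ℝ) := by positivity
  have hb0 : (0:ℝ) ≤ b := by rw [hb_def]; positivity
  have ha0 : (0:ℝ) ≤ a := by rw [ha_def]; positivity
  have htot : a + b + c = m := by
    rw [ha_def, hb_def, hc_def, hm_def]
    exact_mod_cast total_card ends A
  rcases le_or_gt (a - m/4) ((d:ℝ)/2) with hsmall | hbig
  · -- a - m/4 ≤ d/2 : find v with degOut ≥ 1 and degOut - degIn > -2·max(a-m/4,0)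
    have hex : ∃ v ∈ A, 1 ≤ degOut ends A v ∧
        -(2 * max (a - m/4) 0) < (degOut ends A v : ℝ) - (degIn ends A v : ℝ) := by
      by_contra hno
      push_neg at hno
      set T := A.filter (fun v => 1 ≤ degOut ends A v) with hT_def
      have hmax0 : (0:ℝ) ≤ max (a - m/4) 0 := le_max_right _ _
      have hmaxa : a - m/4 ≤ max (a - m/4) 0 := le_max_left _ _
      have h1 : ∑ v ∈ T, ((degOut ends A v : ℝ) - (degIn ends A v : ℝ))
          ≤ (T.card : ℝ) * (-(2 * max (a - m/4) 0)) := by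
        calc ∑ v ∈ T, ((degOut ends A v : ℝ) - (degIn ends A v : ℝ))
            ≤ ∑ _v ∈ T, (-(2 * max (a - m/4) 0)) := by
              apply Finset.sum_le_sum
              intro v hv
              exact hno v (Finset.mem_filter.mp hv).1 (Finset.mem_filter.mp hv).2
          _ = (T.card : ℝ) * (-(2 * max (a - m/4) 0)) := by
              rw [Finset.sum_const, nsmul_eq_mul]
      have h2 : ∑ v ∈ A.filter (fun v => ¬ 1 ≤ degOut ends A v),
          ((degOut ends A v : ℝ) - (degIn ends A v : ℝ)) ≤ 0 := by
        apply Finset.sum_nonpos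
        intro v hv
        have h0 : degOut ends A v = 0 := by
          have := (Finset.mem_filter.mp hv).2
          omega
        rw [h0]
        simp only [Nat.cast_zero, zero_sub, neg_nonpos]
        positivity
      have hsplit := Finset.sum_filter_add_sum_filter_not A (fun v => 1 ≤ degOut ends A v)
        (fun v => (degOut ends A v : ℝ) - (degIn ends A v : ℝ))
      have hid : ∑ v ∈ A, ((degOut ends A v : ℝ) - (degIn ends A v : ℝ)) = c - 2*a := by
        rw [Finset.sum_sub_distrib, ha_def, hc_def, ← Nat.cast_sum, ← Nat.cast_sum,
          sum_degIn ends hloop A, sum_degOut ends A]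
        push_cast
        ring
      rcases le_or_gt 2 T.card with hN | hN
      · have hN' : (2:ℝ) ≤ (T.card : ℝ) := by exact_mod_cast hN
        have hNz : (T.card : ℝ) * (-(2 * max (a - m/4) 0)) ≤ 2 * (-(2 * max (a - m/4) 0)) :=
          mul_le_mul_of_nonpos_right hN' (by linarith)
        rcases max_cases (a - m/4) 0 with ⟨hM1, hM2⟩ | ⟨hM1, hM2⟩ <;>
          rw [hM1] at h1 hNz <;> linarith
      · have hN' : (T.card : ℝ) ≤ 1 := by
          have : T.card ≤ 1 := by omega
          exact_mod_cast this
      -- c ≤ T.card * (d/2) ≤ d/2, but c > m/2 > d : contradiction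
        have hc2 : crossCard ends A = ∑ v ∈ T, degOut ends A v := by
          rw [← sum_degOut ends A,
            ← Finset.sum_filter_add_sum_filter_not A (fun v => 1 ≤ degOut ends A v)
              (degOut ends A)]
          have hz : ∑ v ∈ A.filter (fun v => ¬ 1 ≤ degOut ends A v), degOut ends A v = 0 := by
            apply Finset.sum_eq_zero
            intro v hv
            have := (Finset.mem_filter.mp hv).2
            omega
          rw [hz, add_zero]
        have hcb : c ≤ (T.card : ℝ) * ((d:ℝ)/2) := by
          rw [hc_def, hc2]
          rw [Nat.cast_sum]
          calc ∑ v ∈ T, (degOut ends A v : ℝ) ≤ ∑ _v ∈ T, ((d:ℝ)/2) := by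
                apply Finset.sum_le_sum
                intro v hv
                have hv1 := (Finset.mem_filter.mp hv).1
                have hv2 := (Finset.mem_filter.mp hv).2
                have hb1 := hno v hv1 hv2
                have hb2 : (degIn ends A v : ℝ) + (degOut ends A v : ℝ) ≤ (d:ℝ) := by
                  exact_mod_cast deg_bound ends d hdeg A v
                linarith
            _ = (T.card : ℝ) * ((d:ℝ)/2) := by rw [Finset.sum_const, nsmul_eq_mul]
        have hT0 : (0:ℝ) ≤ (T.card : ℝ) := by positivity
        have hNd : (T.card : ℝ) * ((d:ℝ)/2) ≤ 1 * ((d:ℝ)/2) :=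
          mul_le_mul_of_nonneg_right hN' (by linarith)
        -- c > m/2 and m > 2d
        linarith
    obtain ⟨v, hvA, hy1, hkey⟩ := hex
    have hmove := hloc v hvA
    have hmv1 := inside_erase ends A v
    have hmv2 := outside_erase ends hloop A v hvA
    have hdb := deg_bound ends d hdeg A v
    set x : ℝ := (degIn ends A v : ℝ) with hx_def
    set y : ℝ := (degOut ends A v : ℝ) with hy_def
    have hy1' : (1:ℝ) ≤ y := by rw [hy_def]; exact_mod_cast hy1
    have hx0 : (0:ℝ) ≤ x := by rw [hx_def]; positivity
    have hxy : x + y ≤ (d:ℝ) := by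
      rw [hx_def, hy_def]
      exact_mod_cast hdb
    have e1 : (insideCard ends (A.erase v) : ℝ) = a - x := by
      rw [ha_def, hx_def]
      have h := congrArg (fun n : ℕ => (n : ℝ)) hmv1
      push_cast at h
      linarith
    have e2 : (outsideCard ends (A.erase v) : ℝ) = b + y := by
      rw [hb_def, hy_def]
      exact_mod_cast hmv2
    simp only [muMeasure] at hmove
    rw [← hm_def, ← ha_def, ← hb_def, e1, e2] at hmove
    have habs2 : |b - m/4| = -(b - m/4) := abs_of_neg (by linarith)
    rw [habs2] at hmove
    rcases abs_cases (a - x - m/4) with ⟨hA1, hA2⟩ | ⟨hA1, hA2⟩ <;>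
      rcases abs_cases (b + y - m/4) with ⟨hB1, hB2⟩ | ⟨hB1, hB2⟩ <;>
      rcases abs_cases (a - m/4) with ⟨hC1, hC2⟩ | ⟨hC1, hC2⟩ <;>
      rcases max_cases (a - m/4) 0 with ⟨hm1, hm2⟩ | ⟨hm1, hm2⟩ <;>
      rw [hA1, hB1, hC1] at hmove <;> rw [hm1] at hkey <;> linarith
  · -- a - m/4 > d/2 : any vertex with degIn ≥ 1 works
    have ha1 : 1 ≤ insideCard ends A := by
      by_contra h
      push_neg at h
      have h0 : insideCard ends A = 0 := by omega
      have : a = 0 := by rw [ha_def, h0]; norm_num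
      linarith
    obtain ⟨e0, he0⟩ : (Finset.univ.filter
        (fun e : E => (ends e).1 ∈ A ∧ (ends e).2 ∈ A)).Nonempty := by
      apply Finset.card_pos.mp
      have h : insideCard ends A = (Finset.univ.filter
        (fun e : E => (ends e).1 ∈ A ∧ (ends e).2 ∈ A)).card := rfl
      omega
    have he0A : (ends e0).1 ∈ A ∧ (ends e0).2 ∈ A := (Finset.mem_filter.mp he0).2
    have hx1 : 1 ≤ degIn ends A (ends e0).1 :=
      Finset.card_pos.mpr ⟨e0, Finset.mem_filter.mpr ⟨Finset.mem_univ _, he0A, Or.inl rfl⟩⟩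
    set v : V := (ends e0).1 with hv_def
    have hvA : v ∈ A := he0A.1
    have hmove := hloc v hvA
    have hmv1 := inside_erase ends A v
    have hmv2 := outside_erase ends hloop A v hvA
    have hdb := deg_bound ends d hdeg A v
    set x : ℝ := (degIn ends A v : ℝ) with hx_def
    set y : ℝ := (degOut ends A v : ℝ) with hy_def
    have hx1' : (1:ℝ) ≤ x := by rw [hx_def]; exact_mod_cast hx1
    have hy0 : (0:ℝ) ≤ y := by rw [hy_def]; positivity
    have hxy : x + y ≤ (d:ℝ) := by
      rw [hx_def, hy_def]
      exact_mod_cast hdb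
    have e1 : (insideCard ends (A.erase v) : ℝ) = a - x := by
      rw [ha_def, hx_def]
      have h := congrArg (fun n : ℕ => (n : ℝ)) hmv1
      push_cast at h
      linarith
    have e2 : (outsideCard ends (A.erase v) : ℝ) = b + y := by
      rw [hb_def, hy_def]
      exact_mod_cast hmv2
    simp only [muMeasure] at hmove
    rw [← hm_def, ← ha_def, ← hb_def, e1, e2] at hmove
    have habs : |a - m/4| = a - m/4 := abs_of_pos (by linarith)
    have habs2 : |b - m/4| = -(b - m/4) := abs_of_neg (by linarith)
    rw [habs, habs2] at hmove
    rcases abs_cases (a - x - m/4) with ⟨hA1, hA2⟩ | ⟨hA1, hA2⟩ <;>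
      rcases abs_cases (b + y - m/4) with ⟨hB1, hB2⟩ | ⟨hB1, hB2⟩ <;>
      rw [hA1, hB1] at hmove <;> linarith

/-- A locally optimal partition (A,B) for μ satisfies |m_A - m/4| ≤ d/2 and |m_B - m/4| ≤ d/2. -/
theorem local_opt_partition_balanced {V E : Type*} [Fintype V] [Fintype E] [DecidableEq V]
    (ends : E → V × V) (hloop : ∀ e, (ends e).1 ≠ (ends e).2)
    (d : ℕ)
    (hdeg : ∀ v : V,
      (Finset.univ.filter (fun e : E => (ends e).1 = v ∨ (ends e).2 = v)).card ≤ d)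
    (A : Finset V)
    (hlocA : ∀ v ∈ A, muMeasure ends A ≤ muMeasure ends (A.erase v))
    (hlocB : ∀ v ∉ A, muMeasure ends A ≤ muMeasure ends (insert v A)) :
    |(insideCard ends A : ℝ) - (Fintype.card E : ℝ) / 4| ≤ (d : ℝ) / 2 ∧
      |(outsideCard ends A : ℝ) - (Fintype.card E : ℝ) / 4| ≤ (d : ℝ) / 2 := by
  classical
  have hlocA' : ∀ v ∈ Aᶜ, muMeasure ends Aᶜ ≤ muMeasure ends (Aᶜ.erase v) := by
    intro v hv
    have hv' : v ∉ A := by simpa using hv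
    rw [mu_compl, ← Finset.compl_insert, mu_compl]
    exact hlocB v hv'
  have hu1 := upperU ends hloop d hdeg A hlocA
  have hl1 := lowerL ends hloop d hdeg A hlocA
  have hu2 := upperU ends hloop d hdeg Aᶜ hlocA'
  have hl2 := lowerL ends hloop d hdeg Aᶜ hlocA'
  rw [inside_compl] at hu2
  rw [outside_compl] at hl2
  constructor <;> rw [abs_le] <;> constructor <;> linarith
end

section
/- Let D be a directed graph, v a vertex of D, and D/v the directed graph obtained from D − v by adding an arc uw for every u ∈ N⁻(v) and w ∈ N⁺(v). Then for any set S ⊆ V(D) with v ∉ S: D − S is acyclic if and only if (D/v) − S is acyclic. -/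
/-- For a digraph `D` without self-loops, a vertex `v`, and `S` with `v ∉ S`:
`D − S` is acyclic iff `(D/v) − S` is acyclic, where `D/v` removes `v` and adds an arc
`uw` for every `u ∈ N⁻(v)`, `w ∈ N⁺(v)`. -/
theorem contract_vertex_acyclic_iff {V : Type*} (D : V → V → Prop)
    (hirr : ∀ x, ¬ D x x)
    (v : V) (S : Set V) (hvS : v ∉ S) :
    (∀ x, ¬ Relation.TransGen (fun a b => D a b ∧ a ∉ S ∧ b ∉ S) x x) ↔
      (∀ x, ¬ Relation.TransGen
        (fun a b => (a ≠ v ∧ b ≠ v ∧ (D a b ∨ (D a v ∧ D v b))) ∧ a ∉ S ∧ b ∉ S) x x) := by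
  set R : V → V → Prop := fun a b => D a b ∧ a ∉ S ∧ b ∉ S with hR
  set R' : V → V → Prop := fun a b =>
    (a ≠ v ∧ b ≠ v ∧ (D a b ∨ (D a v ∧ D v b))) ∧ a ∉ S ∧ b ∉ S with hR'
  -- contraction of a path: for x ≠ v
  have claim : ∀ x, x ≠ v → ∀ y, Relation.TransGen R x y →
      (y ≠ v → Relation.TransGen R' x y) ∧
      (y = v → ∃ w, w ≠ v ∧ w ∉ S ∧ D w v ∧ Relation.ReflTransGen R' x w) := by
    intro x hx y h
    induction h with
    | single hxy =>
      constructor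
      · intro hy
        exact Relation.TransGen.single ⟨⟨hx, hy, Or.inl hxy.1⟩, hxy.2.1, hxy.2.2⟩
      · intro hy
        exact ⟨x, hx, hxy.2.1, hy ▸ hxy.1, Relation.ReflTransGen.refl⟩
    | tail hxb hby IH =>
      rename_i b y
      constructor
      · intro hy
        by_cases hb : b = v
        · obtain ⟨w, hw, hwS, hwv, hpath⟩ := IH.2 hb
          exact Relation.TransGen.tail' hpath
            ⟨⟨hw, hy, Or.inr ⟨hwv, hb ▸ hby.1⟩⟩, hwS, hby.2.2⟩
        · exact (IH.1 hb).tail ⟨⟨hb, hy, Or.inl hby.1⟩, hby.2.1, hby.2.2⟩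
      · intro hy
        have hb : b ≠ v := by
          intro h
          have hd := hby.1
          rw [h, hy] at hd
          exact hirr v hd
        exact ⟨b, hb, hby.2.1, hy ▸ hby.1, (IH.1 hb).to_reflTransGen⟩
  constructor
  · intro hac x hx
    have mono : ∀ a b, R' a b → Relation.TransGen R a b := by
      rintro a b ⟨⟨ha, hb, hD⟩, haS, hbS⟩
      rcases hD with h | ⟨h1, h2⟩
      · exact Relation.TransGen.single ⟨h, haS, hbS⟩
      · exact (Relation.TransGen.single ⟨h1, haS, hvS⟩).tail ⟨h2, hvS, hbS⟩
    have mono2 : ∀ a b, Relation.TransGen R' a b → Relation.TransGen R a b := by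
      intro a b h
      induction h with
      | single h => exact mono _ _ h
      | tail _ h IH => exact IH.trans (mono _ _ h)
    exact hac x (mono2 x x hx)
  · intro hac x hx
    by_cases hxv : x = v
    · rw [hxv] at hx
      obtain ⟨a, hva, hav⟩ := (Relation.TransGen.head'_iff).mp hx
      have ha : a ≠ v := by
        intro h
        have hd := hva.1
        rw [h] at hd
        exact hirr v hd
      have hav' : Relation.TransGen R a v := by
        rcases (Relation.reflTransGen_iff_eq_or_transGen).mp hav with h | h
        · exact absurd h.symm ha
        · exact h
      obtain ⟨w, hw, hwS, hwv, hpath⟩ := (claim a ha v hav').2 rfl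
      exact hac a (Relation.TransGen.tail' hpath
        ⟨⟨hw, ha, Or.inr ⟨hwv, hva.1⟩⟩, hwS, hva.2.2⟩)
    · exact hac x ((claim x hxv x hx).1 hxv)
end

section
/- Let h: ℕ → ℝ≥0 satisfy h(s) ≤ 2^{1 + s/2 + d} · h(s/4 + d/2) for s > d (with appropriate rounding) and h(s) ≤ 1 for s ≤ d. Then h(s) ≤ C^s · 2^{O(d log s)} where C = 2^{2/3} ≈ 1.5874; in particular, the total exponent of 2 contributed by the geometric series (1 + s/2 + d) + (1 + s/8 + d/2·(1/2+1)) + ... in s is at most (2/3)s plus a term of order d log s. -/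
/-- The divide-and-conquer recurrence `h(s) ≤ 2^(1 + s/2 + d) · h(s/4 + d/2)` for `s > d`,
with `h(s) ≤ 1` for `s ≤ d`, solves to `h(s) ≤ 2^((2/3)s + O(d log s))`,
i.e. `h(s) ≤ (2^(2/3))^s · 2^(O(d log s))`. -/
theorem divide_and_conquer_recurrence_bound :
    ∃ C : ℝ, 0 < C ∧ ∀ (d : ℕ) (h : ℕ → ℝ),
      (∀ s, 0 ≤ h s) →
      (∀ s, s ≤ d → h s ≤ 1) →
      (∀ s, d < s → h s ≤ (2 : ℝ) ^ ((1 : ℝ) + (s : ℝ) / 2 + (d : ℝ)) * h (s / 4 + d / 2)) →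
      ∀ s : ℕ, h s ≤ (2 : ℝ) ^ ((2 : ℝ) / 3 * (s : ℝ) + C * ((d : ℝ) + 1) * Real.log ((s : ℝ) + 2)) := by
  have hlog : 0 < Real.log (4/3) := Real.log_pos (by norm_num)
  set k : ℝ := 2 / Real.log (4/3) with hk_def
  have hk_pos : 0 < k := by positivity
  refine ⟨k, hk_pos, ?_⟩
  intro d h hpos hbase hrec s
  induction s using Nat.strong_induction_on with
  | _ s ih =>
    by_cases hsd : s ≤ d
    · refine (hbase s hsd).trans ?_
      have hL : (0:ℝ) ≤ Real.log ((s:ℝ) + 2) := Real.log_nonneg (by have : (0:ℝ) ≤ (s:ℝ) := Nat.cast_nonneg s; linarith)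
      have hE : (0:ℝ) ≤ 2/3 * (s:ℝ) + k * ((d:ℝ)+1) * Real.log ((s:ℝ)+2) := by
        have h1 : (0:ℝ) ≤ k * ((d:ℝ)+1) := by positivity
        have h2 := mul_nonneg h1 hL
        have h3 : (0:ℝ) ≤ 2/3 * (s:ℝ) := by positivity
        linarith
      calc (1:ℝ) = 2 ^ (0:ℝ) := by norm_num
        _ ≤ _ := Real.rpow_le_rpow_of_exponent_le one_le_two hE
    · push_neg at hsd
      set t : ℕ := s / 4 + d / 2 with ht_def
      have h1 : ((s/4 : ℕ):ℝ) ≤ (s:ℝ)/4 := by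
        have := Nat.cast_div_le (m := s) (n := 4) (α := ℝ); simpa using this
      have h2 : ((d/2 : ℕ):ℝ) ≤ (d:ℝ)/2 := by
        have := Nat.cast_div_le (m := d) (n := 2) (α := ℝ); simpa using this
      have htr : (t:ℝ) ≤ (s:ℝ)/4 + (d:ℝ)/2 := by
        have h3 : (t:ℝ) = ((s/4:ℕ):ℝ) + ((d/2:ℕ):ℝ) := by rw [ht_def]; push_cast; ring
        linarith
      have hd1 : (d:ℝ) + 1 ≤ (s:ℝ) := by exact_mod_cast hsd
      have htlt : t < s := by
        have : (t:ℝ) < (s:ℝ) := by linarith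
        exact_mod_cast this
      have hratio : (4/3 : ℝ) * ((t:ℝ) + 2) ≤ (s:ℝ) + 2 := by linarith
      have hL : Real.log (4/3) + Real.log ((t:ℝ)+2) ≤ Real.log ((s:ℝ)+2) := by
        have hposT : (0:ℝ) < (t:ℝ) + 2 := by positivity
        have := Real.log_le_log (by positivity) hratio
        rwa [Real.log_mul (by norm_num) (ne_of_gt hposT)] at this
      have hkLc : k * ((d:ℝ)+1) * Real.log (4/3) = 2 * ((d:ℝ)+1) := by
        have h0 : k * Real.log (4/3) = 2 := div_mul_cancel₀ 2 (ne_of_gt hlog)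
        linear_combination ((d:ℝ)+1) * h0
      have hmul := mul_le_mul_of_nonneg_left hL
        (by positivity : (0:ℝ) ≤ k * ((d:ℝ)+1))
      have key : (1 : ℝ) + (s:ℝ)/2 + (d:ℝ) +
          (2/3 * (t:ℝ) + k * ((d:ℝ)+1) * Real.log ((t:ℝ)+2)) ≤
          2/3 * (s:ℝ) + k * ((d:ℝ)+1) * Real.log ((s:ℝ)+2) := by
        nlinarith [hmul, hkLc, htr, hd1, Nat.cast_nonneg (α := ℝ) d]
      calc h s ≤ (2:ℝ) ^ ((1:ℝ) + (s:ℝ)/2 + (d:ℝ)) * h t := hrec s hsd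
        _ ≤ (2:ℝ) ^ ((1:ℝ) + (s:ℝ)/2 + (d:ℝ)) *
            (2:ℝ) ^ (2/3 * (t:ℝ) + k * ((d:ℝ)+1) * Real.log ((t:ℝ)+2)) := by
            exact mul_le_mul_of_nonneg_left (ih t htlt)
              (Real.rpow_nonneg (by norm_num) _)
        _ = (2:ℝ) ^ ((1:ℝ) + (s:ℝ)/2 + (d:ℝ) +
            (2/3 * (t:ℝ) + k * ((d:ℝ)+1) * Real.log ((t:ℝ)+2))) := by
            rw [← Real.rpow_add (by norm_num : (0:ℝ) < 2)]
        _ ≤ _ := Real.rpow_le_rpow_of_exponent_le one_le_two key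
end

section
/- If H and M are disjoint vertex sets in a tournament T such that T − H is acyclic and every M-block in T − H has size at most b, and C is the set of vertices inconsistent with M in T, then C ⊆ H, and every M-block of T − C has size at most |H| + b. -/
/-- The `M`-blocks of the subgraph of `G` induced on `W` (for `M ⊆ W`). -/
def blocksIn {V : Type*} (G : V → V → Prop) (W : Set V) (M : Set V) : Set (Set V) :=
  {B | ∃ u ∈ M, ∃ w ∈ M, G u w ∧ (∀ x ∈ M, ¬ (G u x ∧ G x w)) ∧
      B = {x | x ∈ W ∧ G u x ∧ G x w}} ∪
  {B | ∃ u ∈ M, (∀ x ∈ M, ¬ G x u) ∧ B = {x | x ∈ W ∧ G x u}} ∪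
  {B | ∃ w ∈ M, (∀ x ∈ M, ¬ G w x) ∧ B = {x | x ∈ W ∧ G w x}}

/-! A vertex whose addition to `M` closes a cycle lies on a cycle avoiding any feedback vertex
set `H` disjoint from `M`, unless it is itself in `H`. Each block of `T − C` is cut out by the
same condition as a block of `T − H`, so it differs from that block only inside `H`. -/

section

variable {V : Type*}

theorem mem_of_transGen_restrict_insert {r : V → V → Prop} {M H : Set V} {v : V}
    (hdisj : Disjoint M H)
    (hacyc : ∀ x, ¬ Relation.TransGen (fun a b => a ∉ H ∧ b ∉ H ∧ r a b) x x)
    (hv : Relation.TransGen (fun a b => a ∈ M ∪ {v} ∧ b ∈ M ∪ {v} ∧ r a b) v v) :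
    v ∈ H := by
  by_contra hvH
  have hsub : M ∪ {v} ⊆ Hᶜ :=
    Set.union_subset hdisj.subset_compl_right (Set.singleton_subset_iff.2 hvH)
  exact hacyc v <|
    Relation.TransGen.mono (fun _ _ ⟨ha, hb, hab⟩ => ⟨hsub ha, hsub hb, hab⟩) _ _ hv

theorem exists_mem_blocksIn_subset_compl_union {G : V → V → Prop} {W M B : Set V}
    (hB : B ∈ blocksIn G W M) (W' : Set V) :
    ∃ B' ∈ blocksIn G W' M, B ⊆ W'ᶜ ∪ B' := by
  have key : ∀ P : V → Prop, {x | x ∈ W ∧ P x} ⊆ W'ᶜ ∪ {x | x ∈ W' ∧ P x} :=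
    fun P x ⟨_, hx⟩ => by
      by_cases hW' : x ∈ W'
      exacts [Or.inr ⟨hW', hx⟩, Or.inl hW']
  rcases hB with (⟨u, hu, w, hw, huw, hcons, rfl⟩ | ⟨u, hu, hsrc, rfl⟩) | ⟨w, hw, hsnk, rfl⟩
  · exact ⟨_, Or.inl (Or.inl ⟨u, hu, w, hw, huw, hcons, rfl⟩), key _⟩
  · exact ⟨_, Or.inl (Or.inr ⟨u, hu, hsrc, rfl⟩), key _⟩
  · exact ⟨_, Or.inr ⟨w, hw, hsnk, rfl⟩, key _⟩

end

theorem inconsistent_subset_and_blocks_bound_general {V : Type*} [Fintype V] (G : V → V → Prop)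
    (M H : Set V) (hdisj : Disjoint M H)
    (hHfvs : ∀ x, ¬ Relation.TransGen (fun a b => a ∉ H ∧ b ∉ H ∧ G a b) x x)
    (b : ℕ)
    (hblocks : ∀ B ∈ blocksIn G Hᶜ M, B.ncard ≤ b) :
    {v : V | Relation.TransGen
        (fun a b => a ∈ M ∪ {v} ∧ b ∈ M ∪ {v} ∧ G a b) v v} ⊆ H ∧
    ∀ B ∈ blocksIn G
        ({v : V | Relation.TransGen
          (fun a b => a ∈ M ∪ {v} ∧ b ∈ M ∪ {v} ∧ G a b) v v})ᶜ M,
      B.ncard ≤ H.ncard + b := by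
  refine ⟨fun v hv => mem_of_transGen_restrict_insert hdisj hHfvs hv, fun B hB => ?_⟩
  obtain ⟨B', hB', hsub⟩ := exists_mem_blocksIn_subset_compl_union hB Hᶜ
  rw [compl_compl] at hsub
  calc B.ncard ≤ (H ∪ B').ncard := Set.ncard_le_ncard hsub
    _ ≤ H.ncard + B'.ncard := Set.ncard_union_le H B'
    _ ≤ H.ncard + b := Nat.add_le_add_left (hblocks B' hB') _

/-- If `H` and `M` are disjoint, `T − H` is acyclic, and every `M`-block of `T − H` has size
at most `b`, then the set `C` of vertices inconsistent with `M` satisfies `C ⊆ H`, and every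
`M`-block of `T − C` has size at most `|H| + b`. -/
theorem inconsistent_subset_and_blocks_bound {V : Type*} [Fintype V] (G : V → V → Prop)
    (hirr : ∀ x, ¬ G x x)
    (htour : ∀ u v : V, u ≠ v → (G u v ↔ ¬ G v u))
    (M H : Set V) (hdisj : Disjoint M H)
    (hHfvs : ∀ x, ¬ Relation.TransGen (fun a b => a ∉ H ∧ b ∉ H ∧ G a b) x x)
    (b : ℕ)
    (hblocks : ∀ B ∈ blocksIn G Hᶜ M, B.ncard ≤ b) :
    {v : V | Relation.TransGen
        (fun a b => a ∈ M ∪ {v} ∧ b ∈ M ∪ {v} ∧ G a b) v v} ⊆ H ∧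
    ∀ B ∈ blocksIn G
        ({v : V | Relation.TransGen
          (fun a b => a ∈ M ∪ {v} ∧ b ∈ M ∪ {v} ∧ G a b) v v})ᶜ M,
      B.ncard ≤ H.ncard + b :=
  inconsistent_subset_and_blocks_bound_general G M H hdisj hHfvs b hblocks
end

section
/- Let T be a tournament, M ⊆ V(T) with T[M] acyclic, and let B_1, ..., B_t denote the M-blocks of T restricted to vertices consistent with M, indexed by the topological order of T[M]. For any directed triangle of T − M whose vertices do not all lie in a single block B_i, there exist two of its vertices a ∈ B_i, b ∈ B_j with i > j such that the arc ab is present; moreover there then exists w ∈ M forming a directed triangle b, w, a in T. -/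
/-- The block index of a vertex `v` relative to `M`: the number of elements of `M`
that are in-neighbors of `v`. -/
noncomputable def mIdx {V : Type*} (G : V → V → Prop) (M : Set V) (v : V) : ℕ :=
  {u | u ∈ M ∧ G u v}.ncard

/-- For a directed triangle of `T − M` (with all three vertices consistent with `M`)
whose vertices do not all lie in a single `M`-block, there are two of its vertices
`a ∈ B_i`, `b ∈ B_j` with `i > j` and arc `ab`, and then some `w ∈ M` forms a directed
triangle `b → w → a → b` in `T`. -/
theorem shared_triangle_gives_backward_arc {V : Type*} [Fintype V] (G : V → V → Prop)
    (hirr : ∀ x, ¬ G x x)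
    (htour : ∀ u v : V, u ≠ v → (G u v ↔ ¬ G v u))
    (M : Set V)
    (hMacyc : ∀ x, ¬ Relation.TransGen (fun a b => a ∈ M ∧ b ∈ M ∧ G a b) x x)
    (x y z : V) (hx : x ∉ M) (hy : y ∉ M) (hz : z ∉ M)
    (hconsx : ∀ w, ¬ Relation.TransGen
      (fun a b => a ∈ M ∪ {x} ∧ b ∈ M ∪ {x} ∧ G a b) w w)
    (hconsy : ∀ w, ¬ Relation.TransGen
      (fun a b => a ∈ M ∪ {y} ∧ b ∈ M ∪ {y} ∧ G a b) w w)
    (hconsz : ∀ w, ¬ Relation.TransGen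
      (fun a b => a ∈ M ∪ {z} ∧ b ∈ M ∪ {z} ∧ G a b) w w)
    (hxy : G x y) (hyz : G y z) (hzx : G z x)
    (hnotsame : ¬ (mIdx G M x = mIdx G M y ∧ mIdx G M y = mIdx G M z)) :
    ∃ a b : V, a ∈ ({x, y, z} : Set V) ∧ b ∈ ({x, y, z} : Set V) ∧
      mIdx G M b < mIdx G M a ∧ G a b ∧ ∃ w ∈ M, G b w ∧ G w a := by
  classical
  have key : ∀ a b : V, b ∉ M → G a b → mIdx G M b < mIdx G M a →
      ∃ w ∈ M, G b w ∧ G w a := by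
    intro a b hbM hab hlt
    unfold mIdx at hlt
    have hsub : ¬ ({u | u ∈ M ∧ G u a} ⊆ {u | u ∈ M ∧ G u b}) := by
      intro hs
      exact absurd (Set.ncard_le_ncard hs (Set.toFinite _)) (not_le.mpr hlt)
    obtain ⟨w, hwa, hwb⟩ := Set.not_subset.mp hsub
    refine ⟨w, hwa.1, ?_, hwa.2⟩
    have hne : w ≠ b := fun h => hbM (h ▸ hwa.1)
    have : ¬ G w b := fun h => hwb ⟨hwa.1, h⟩
    exact (htour b w hne.symm).mpr (by simpa using this)
  rcases lt_trichotomy (mIdx G M y) (mIdx G M x) with h1 | h1 | h1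
  · exact ⟨x, y, by simp, by simp, h1, hxy, key x y hy hxy h1⟩
  · rcases lt_trichotomy (mIdx G M z) (mIdx G M y) with h2 | h2 | h2
    · exact ⟨y, z, by simp, by simp, h2, hyz, key y z hz hyz h2⟩
    · exact absurd ⟨h1.symm, h2.symm⟩ hnotsame
    · exact ⟨z, x, by simp, by simp, by omega, hzx, key z x hx hzx (by omega)⟩
  · rcases lt_trichotomy (mIdx G M z) (mIdx G M y) with h2 | h2 | h2
    · exact ⟨y, z, by simp, by simp, h2, hyz, key y z hz hyz h2⟩
    · exact ⟨z, x, by simp, by simp, by omega, hzx, key z x hx hzx (by omega)⟩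
    · exact ⟨z, x, by simp, by simp, by omega, hzx, key z x hx hzx (by omega)⟩
end
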